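/- [Lemma 2: maximal conflict of interest everywhere] Assume there are no redundant actions for the decision-maker and no redundant actions for the experts, and that ū is concave on Δ(Ω) (i.e., ū(t·π + (1−t)·π') ≥ t·ū(π) + (1−t)·ū(π') for all π, π' ∈ Δ(Ω) and t ∈ [0,1]). Then for every π ∈ Δ(Ω), the set BR(π) equals the set of minimizers of α ↦ u(α,π) over Δ(Â): α ∈ BR(π) if and only if α ∈ Δ(Â) and u(α,π) ≤ u(α',π) for all α' ∈ Δ(Â). -/

import Mathlib

open Finset

variable {Ω A : Type*}

/-- Expected payoff of mixed action `α` at belief `π` (bilinear extension of `u`). -/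
noncomputable def pay [Fintype Ω] [Fintype A] (u : A → Ω → ℝ) (α : A → ℝ) (π : Ω → ℝ) : ℝ :=
  ∑ a, ∑ ω, α a * π ω * u a ω

/-- Expected payoff of pure action `a` at belief `π`. -/
noncomputable def payP [Fintype Ω] (u : A → Ω → ℝ) (a : A) (π : Ω → ℝ) : ℝ :=
  ∑ ω, π ω * u a ω

/-- Pure best replies of the decision-maker at belief `π`. -/
def br [Fintype Ω] (v : A → Ω → ℝ) (π : Ω → ℝ) : Set A :=
  {a | ∀ a', payP v a' π ≤ payP v a π}

/-- Mixed best replies of the decision-maker at belief `π`. -/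
def BR [Fintype Ω] [Fintype A] (v : A → Ω → ℝ) (π : Ω → ℝ) : Set (A → ℝ) :=
  {α ∈ stdSimplex ℝ A | ∀ α' ∈ stdSimplex ℝ A, pay v α' π ≤ pay v α π}

/-- The expert value function `ū(π) = max_{α ∈ BR(π)} u(α, π)`. -/
noncomputable def ubar [Fintype Ω] [Fintype A] (u v : A → Ω → ℝ) (π : Ω → ℝ) : ℝ :=
  sSup ((fun α => pay u α π) '' BR v π)

/-- The decision-maker value function `v̄(π) = max_a v(a, π)`. -/
noncomputable def vbar [Fintype Ω] [Fintype A] (v : A → Ω → ℝ) (π : Ω → ℝ) : ℝ :=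
  ⨆ a, payP v a π

/-- Actions that are a best reply to some belief. -/
def Ahat [Fintype Ω] [Fintype A] (v : A → Ω → ℝ) : Set A :=
  {a | ∃ π ∈ stdSimplex ℝ Ω, a ∈ br v π}

/-- Mixed actions supported on `B`. -/
def simplexOn [Fintype A] (B : Set A) : Set (A → ℝ) :=
  {α | α ∈ stdSimplex ℝ A ∧ ∀ a ∉ B, α a = 0}

/-- `(lam, p)` is a splitting of the prior. -/
def IsSplitting [Fintype Ω] {S : Type*} [Fintype S] (lam : S → ℝ) (p : S → Ω → ℝ)
    (prior : Ω → ℝ) : Prop :=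
  (∀ s, 0 < lam s) ∧ (∑ s, lam s) = 1 ∧ (∀ s, p s ∈ stdSimplex ℝ Ω) ∧
    ∀ ω, (∑ s, lam s * p s ω) = prior ω

/-- `(lam, p)` is an optimal splitting of the prior: it attains `cav ū (prior)`. -/
def IsOptimalSplitting [Fintype Ω] [Fintype A] (u v : A → Ω → ℝ) {S : Type*} [Fintype S]
    (lam : S → ℝ) (p : S → Ω → ℝ) (prior : Ω → ℝ) : Prop :=
  IsSplitting lam p prior ∧
    ∀ (T : Type) [Fintype T] [Nonempty T] (mu : T → ℝ) (q : T → Ω → ℝ),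
      IsSplitting mu q prior →
        (∑ t, mu t * ubar u v (q t)) ≤ ∑ s, lam s * ubar u v (p s)

/-- Beliefs at which `a` is optimal for the decision-maker. -/
def BRinv [Fintype Ω] [Fintype A] (v : A → Ω → ℝ) (a : A) : Set (Ω → ℝ) :=
  {π ∈ stdSimplex ℝ Ω | payP v a π = vbar v π}

/-- No redundant actions for the decision-maker. -/
def NoRedundantDM [Fintype Ω] [Fintype A] (v : A → Ω → ℝ) : Prop :=
  ∀ B : Set A, B.Nonempty → B ⊂ Ahat v →
    ∃ π ∈ stdSimplex ℝ Ω, ∀ a ∈ B, payP v a π < vbar v π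

/-- No redundant actions for the experts. -/
def NoRedundantExperts [Fintype Ω] (u : A → Ω → ℝ) : Prop :=
  ∀ a a' : A, a ≠ a' → ∃ ω, u a ω ≠ u a' ω

/-- The expert value function `ū` is concave on the simplex. -/
def UbarConcave [Fintype Ω] [Fintype A] (u v : A → Ω → ℝ) : Prop :=
  ∀ π ∈ stdSimplex ℝ Ω, ∀ π' ∈ stdSimplex ℝ Ω, ∀ t ∈ Set.Icc (0 : ℝ) 1,
    t * ubar u v π + (1 - t) * ubar u v π' ≤ ubar u v (fun ω => t * π ω + (1 - t) * π' ω)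

/-! The key inequality is `ū(π) ≤ u(a, π)` for every `a ∈ Â`. By no redundancy for the
decision-maker there is a belief `ρ` at which `a` is the unique best reply; then `ū = u(a, ·)` on
the segment from `ρ` a little towards `π`, and concavity of `ū` along that segment carries the
inequality back to `π`. As `ū(π)` is the largest expert payoff among the best replies at `π`,
every best reply minimises `u(·, π)` over `Â`.

Conversely, let `a ∈ Â` attain `ū(π)`. Choose `π'` at which `a` is the unique best reply and
`u(a, π')` differs from every other `u(b, π')`: the beliefs of the first kind contain an open
cone, which finitely many hyperplanes cannot cover, and the hyperplanes are proper because no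
two expert payoff vectors coincide. At `σ` slightly moved from `π` towards `π'`, concavity and
the key inequality force `ū(σ) = u(a, σ)`, so the best reply realising `ū(σ)` is `a`; and best
replies near `π` are best replies at `π`. -/

open Filter Topology MeasureTheory

section Simplex

variable {A : Type*} [Fintype A] {α f : A → ℝ} {m : ℝ}

theorem le_sum_mul_of_mem_stdSimplex (hα : α ∈ stdSimplex ℝ A) (hm : ∀ a, α a ≠ 0 → m ≤ f a) :
    m ≤ ∑ a, α a * f a :=
  calc m = ∑ a, α a * m := by rw [← sum_mul, hα.2, one_mul]
    _ ≤ ∑ a, α a * f a := sum_le_sum fun a _ => by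
        rcases eq_or_ne (α a) 0 with h | h
        · simp [h]
        · exact mul_le_mul_of_nonneg_left (hm a h) (hα.1 a)

theorem sum_mul_le_of_mem_stdSimplex (hα : α ∈ stdSimplex ℝ A) (hm : ∀ a, α a ≠ 0 → f a ≤ m) :
    ∑ a, α a * f a ≤ m := by
  simpa using le_sum_mul_of_mem_stdSimplex (f := -f) (m := -m) hα fun a ha => neg_le_neg (hm a ha)

theorem sum_mul_le_iff_of_mem_stdSimplex (hα : α ∈ stdSimplex ℝ A)
    (hm : ∀ a, α a ≠ 0 → m ≤ f a) : ∑ a, α a * f a ≤ m ↔ ∀ a, α a ≠ 0 → f a = m := by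
  have hsum : ∑ a, α a * f a - m = ∑ a, α a * (f a - m) := by
    simp only [mul_sub, sum_sub_distrib, ← sum_mul, hα.2, one_mul]
  have hnonneg : ∀ a ∈ univ, 0 ≤ α a * (f a - m) := fun a _ => by
    rcases eq_or_ne (α a) 0 with h | h
    · simp [h]
    · exact mul_nonneg (hα.1 a) (sub_nonneg.2 (hm a h))
  rw [← sub_nonpos, hsum, (sum_nonneg hnonneg).ge_iff_eq', sum_eq_zero_iff_of_nonneg hnonneg]
  refine forall_congr' fun a => ?_
  simp only [mem_univ, true_implies, mul_eq_zero, sub_eq_zero]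
  tauto

theorem le_sum_mul_iff_of_mem_stdSimplex (hα : α ∈ stdSimplex ℝ A)
    (hm : ∀ a, α a ≠ 0 → f a ≤ m) : m ≤ ∑ a, α a * f a ↔ ∀ a, α a ≠ 0 → f a = m := by
  have := sum_mul_le_iff_of_mem_stdSimplex (f := -f) (m := -m) hα fun a ha => neg_le_neg (hm a ha)
  simpa [sum_neg_distrib, neg_le_neg_iff, neg_inj] using this

theorem mem_argmin_simplexOn_iff {B : Set A} (hm : ∀ b ∈ B, m ≤ f b) (hB : ∃ b ∈ B, f b = m) :
    (α ∈ simplexOn B ∧ ∀ α' ∈ simplexOn B, ∑ a, α a * f a ≤ ∑ a, α' a * f a) ↔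
      α ∈ stdSimplex ℝ A ∧ ∀ a, α a ≠ 0 → a ∈ B ∧ f a = m := by
  classical
  have mem_of_ne_zero {α : A → ℝ} (hα : α ∈ simplexOn B) (a : A) (ha : α a ≠ 0) : a ∈ B :=
    by_contra fun h => ha (hα.2 a h)
  have le_sum {α : A → ℝ} (hα : α ∈ simplexOn B) : m ≤ ∑ a, α a * f a :=
    le_sum_mul_of_mem_stdSimplex hα.1 fun a ha => hm a (mem_of_ne_zero hα a ha)
  obtain ⟨b, hb, hfb⟩ := hB
  have hsingle : Pi.single b 1 ∈ simplexOn B :=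
    ⟨single_mem_stdSimplex ℝ b, fun a ha => Pi.single_eq_of_ne (ne_of_mem_of_not_mem hb ha).symm _⟩
  constructor
  · rintro ⟨hα, hmin⟩
    have hle : ∑ a, α a * f a ≤ m := by simpa [Pi.single_apply, hfb] using hmin _ hsingle
    have hsupp := (sum_mul_le_iff_of_mem_stdSimplex hα.1
      fun a ha => hm a (mem_of_ne_zero hα a ha)).1 hle
    exact ⟨hα.1, fun a ha => ⟨mem_of_ne_zero hα a ha, hsupp a ha⟩⟩
  · rintro ⟨hα, hsupp⟩
    have hα' : α ∈ simplexOn B := ⟨hα, fun a ha => by_contra fun h => ha (hsupp a h).1⟩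
    have hle : ∑ a, α a * f a ≤ m := (sum_mul_le_iff_of_mem_stdSimplex hα
      fun a ha => (hsupp a ha).2.ge).2 fun a ha => (hsupp a ha).2
    exact ⟨hα', fun α' h => hle.trans (le_sum h)⟩

end Simplex

theorem IsOpen.exists_forall_dotProduct_ne_zero {ι Ω : Type*} [Finite ι] [Fintype Ω]
    {U : Set (Ω → ℝ)} (hU : IsOpen U) (hne : U.Nonempty) {w : ι → Ω → ℝ} (hw : ∀ i, w i ≠ 0) :
    ∃ x ∈ U, ∀ i, w i ⬝ᵥ x ≠ 0 := by
  classical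
  by_contra! hcover
  have hnull : ∀ i, volume (LinearMap.ker (dotProductEquiv ℝ Ω (w i)) : Set (Ω → ℝ)) = 0 :=
    fun i => Measure.addHaar_submodule volume _ <| by
      rw [Ne, LinearMap.ker_eq_top, LinearEquiv.map_eq_zero_iff]; exact hw i
  have hU0 : volume U = 0 :=
    measure_mono_null (fun x hx => Set.mem_iUnion.2 (hcover x hx)) (measure_iUnion_null hnull)
  exact (hU.measure_pos volume hne).ne' hU0

section Payoffs

variable [Fintype Ω]

theorem payP_eq_dotProduct (u : A → Ω → ℝ) (a : A) (π : Ω → ℝ) : payP u a π = π ⬝ᵥ u a := rfl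

theorem pay_eq_sum_payP [Fintype A] (u : A → Ω → ℝ) (α : A → ℝ) (π : Ω → ℝ) :
    pay u α π = ∑ a, α a * payP u a π := by
  simp only [pay, payP, mul_sum, mul_assoc]

theorem pay_single [Fintype A] [DecidableEq A] (u : A → Ω → ℝ) (a : A) (π : Ω → ℝ) :
    pay u (Pi.single a 1) π = payP u a π := by
  simp [pay_eq_sum_payP, Pi.single_apply]

theorem payP_smul (u : A → Ω → ℝ) (a : A) (c : ℝ) (π : Ω → ℝ) :
    payP u a (c • π) = c * payP u a π := smul_dotProduct c π (u a)

theorem payP_mix (u : A → Ω → ℝ) (a : A) (t : ℝ) (x y : Ω → ℝ) :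
    payP u a (t • x + (1 - t) • y) = t * payP u a x + (1 - t) * payP u a y := by
  simp only [payP_eq_dotProduct, add_dotProduct, smul_dotProduct, smul_eq_mul]

theorem eventually_forall_payP_mix_lt [Finite A] {u : A → Ω → ℝ} {P : A → Prop} {c : A}
    {y : Ω → ℝ} (h : ∀ b, P b → payP u b y < payP u c y) (x : Ω → ℝ) :
    ∀ᶠ t in 𝓝 (0 : ℝ), ∀ b, P b →
      payP u b (t • x + (1 - t) • y) < payP u c (t • x + (1 - t) • y) := by
  simp only [payP_mix]
  have hlim (a : A) : Tendsto (fun t : ℝ => t * payP u a x + (1 - t) * payP u a y) (𝓝 0)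
      (𝓝 (payP u a y)) :=
    Continuous.tendsto' (by fun_prop) _ _ (by simp)
  refine eventually_all.2 fun b => ?_
  by_cases hb : P b
  · exact ((hlim b).eventually_lt (hlim c) (h b hb)).mono fun _ ht _ => ht
  · exact Eventually.of_forall fun _ hPb => absurd hPb hb

theorem eventually_mix_ne_zero {p q : ℝ} (hp : p ≠ 0) :
    ∀ᶠ t in 𝓝[>] (0 : ℝ), t * p + (1 - t) * q ≠ 0 := by
  rcases eq_or_ne q 0 with rfl | hq
  · exact eventually_nhdsWithin_of_forall fun t ht => by simpa using ⟨ne_of_gt ht, hp⟩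
  · exact nhdsWithin_le_nhds <| (Continuous.tendsto' (by fun_prop) 0 q (by simp)).eventually_ne hq

theorem eventually_mix_mem_stdSimplex {x y : Ω → ℝ} (hx : x ∈ stdSimplex ℝ Ω)
    (hy : y ∈ stdSimplex ℝ Ω) : ∀ᶠ t in 𝓝[>] (0 : ℝ), t • x + (1 - t) • y ∈ stdSimplex ℝ Ω :=
  Filter.mem_of_superset (Ioo_mem_nhdsGT one_pos) fun _ ht =>
    convex_stdSimplex ℝ Ω hx hy ht.1.le (by linarith [ht.2]) (by ring)

end Payoffs

section BestReplies

variable [Fintype Ω] [Fintype A] [Nonempty A] {v : A → Ω → ℝ} {π : Ω → ℝ}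

theorem br_nonempty (v : A → Ω → ℝ) (π : Ω → ℝ) : (br v π).Nonempty := by
  obtain ⟨b, -, hb⟩ := Set.exists_max_image Set.univ (payP v · π) Set.finite_univ Set.univ_nonempty
  exact ⟨b, fun a => hb a trivial⟩

omit [Nonempty A] in
theorem br_subset_Ahat (hπ : π ∈ stdSimplex ℝ Ω) : br v π ⊆ Ahat v := fun _ ha => ⟨π, hπ, ha⟩

theorem vbar_eq_payP_of_mem_br {b : A} (hb : b ∈ br v π) : vbar v π = payP v b π :=
  le_antisymm (ciSup_le hb) (le_ciSup (f := (payP v · π)) (Set.finite_range _).bddAbove b)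

omit [Fintype A] [Nonempty A] in
theorem mem_br_iff_payP_eq {a b : A} (hb : b ∈ br v π) : a ∈ br v π ↔ payP v a π = payP v b π :=
  ⟨fun ha => le_antisymm (hb a) (ha b), fun h a' => h ▸ hb a'⟩

theorem mem_BR_iff {α : A → ℝ} :
    α ∈ BR v π ↔ α ∈ stdSimplex ℝ A ∧ ∀ a, α a ≠ 0 → a ∈ br v π := by
  classical
  obtain ⟨b, hb⟩ := br_nonempty v π
  have hle {α : A → ℝ} (hα : α ∈ stdSimplex ℝ A) : pay v α π ≤ payP v b π := by
    rw [pay_eq_sum_payP]; exact sum_mul_le_of_mem_stdSimplex hα fun a _ => hb a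
  have hsupp {α : A → ℝ} (hα : α ∈ stdSimplex ℝ A) :
      payP v b π ≤ pay v α π ↔ ∀ a, α a ≠ 0 → a ∈ br v π := by
    simp only [pay_eq_sum_payP, le_sum_mul_iff_of_mem_stdSimplex hα fun a _ => hb a,
      mem_br_iff_payP_eq hb]
  constructor
  · rintro ⟨hα, hmax⟩
    refine ⟨hα, (hsupp hα).1 ?_⟩
    simpa [pay_single] using hmax _ (single_mem_stdSimplex ℝ b)
  · rintro ⟨hα, hbr⟩
    exact ⟨hα, fun α' hα' => (hle hα').trans ((hsupp hα).2 hbr)⟩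

theorem eventually_br_mix_subset (x y : Ω → ℝ) :
    ∀ᶠ t in 𝓝 (0 : ℝ), br v (t • x + (1 - t) • y) ⊆ br v y := by
  obtain ⟨c, hc⟩ := br_nonempty v y
  have hlt : ∀ b, b ∉ br v y → payP v b y < payP v c y := fun b hb =>
    (hc b).lt_of_ne (mt (mem_br_iff_payP_eq hc).2 hb)
  exact (eventually_forall_payP_mix_lt hlt x).mono fun _ ht b hb =>
    by_contra fun hby => (ht b hby).not_ge (hb c)

end BestReplies

section ExpertValue

variable [Fintype Ω] [Fintype A] [Nonempty A]

theorem isGreatest_ubar (u v : A → Ω → ℝ) (π : Ω → ℝ) :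
    IsGreatest ((payP u · π) '' br v π) (ubar u v π) := by
  classical
  obtain ⟨b, hb, hmax⟩ :=
    Set.exists_max_image (br v π) (payP u · π) (Set.toFinite _) (br_nonempty v π)
  have hsingle : Pi.single b 1 ∈ BR v π := by
    refine mem_BR_iff.2 ⟨single_mem_stdSimplex ℝ b, fun a ha => ?_⟩
    obtain rfl : a = b := by_contra fun h => ha (Pi.single_eq_of_ne h 1)
    exact hb
  have hubar : ubar u v π = payP u b π := by
    refine IsGreatest.csSup_eq ⟨⟨_, hsingle, pay_single u b π⟩, ?_⟩
    rintro _ ⟨α, hα, rfl⟩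
    obtain ⟨hα, hsupp⟩ := mem_BR_iff.1 hα
    simp only [pay_eq_sum_payP]
    exact sum_mul_le_of_mem_stdSimplex hα fun a ha => hmax a (hsupp a ha)
  exact hubar ▸ ⟨⟨b, hb, rfl⟩, by rintro _ ⟨a, ha, rfl⟩; exact hmax a ha⟩

end ExpertValue

section StrictBestReplies

variable [Fintype Ω] [Fintype A] [Nonempty A] {u v : A → Ω → ℝ} {π ρ : Ω → ℝ} {a : A}

def strictBRinv (v : A → Ω → ℝ) (a : A) : Set (Ω → ℝ) :=
  {ρ ∈ stdSimplex ℝ Ω | ∀ b ∈ Ahat v \ {a}, payP v b ρ < payP v a ρ}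

omit [Nonempty A] in
theorem eq_of_mem_br_of_mem_strictBRinv (hρ : ρ ∈ strictBRinv v a) {b : A} (hb : b ∈ br v ρ) :
    b = a :=
  by_contra fun h => (hρ.2 b ⟨br_subset_Ahat hρ.1 hb, h⟩).not_ge (hb a)

theorem ubar_eq_payP_of_mem_strictBRinv (u : A → Ω → ℝ) (hρ : ρ ∈ strictBRinv v a) :
    ubar u v ρ = payP u a ρ := by
  obtain ⟨b, hb, hbu⟩ := (isGreatest_ubar u v ρ).1
  rw [← hbu, eq_of_mem_br_of_mem_strictBRinv hρ hb]

theorem strictBRinv_nonempty (hnrDM : NoRedundantDM v) (ha : a ∈ Ahat v)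
    (hπ : π ∈ stdSimplex ℝ Ω) : (strictBRinv v a).Nonempty := by
  by_cases hB : (Ahat v \ {a}).Nonempty
  · obtain ⟨ρ, hρ, hlt⟩ :=
      hnrDM _ hB (Set.sdiff_singleton_ssubset.2 ha)
    obtain ⟨c, hc⟩ := br_nonempty v ρ
    have hca : c = a := by_contra fun h =>
      (hlt c ⟨br_subset_Ahat hρ hc, h⟩).ne (vbar_eq_payP_of_mem_br hc).symm
    subst hca
    exact ⟨ρ, hρ, fun b hb => (hlt b hb).trans_eq (vbar_eq_payP_of_mem_br hc)⟩
  · exact ⟨π, hπ, fun b hb => absurd ⟨b, hb⟩ hB⟩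

omit [Nonempty A] in
theorem eventually_mix_mem_strictBRinv (hρ : ρ ∈ strictBRinv v a) (hπ : π ∈ stdSimplex ℝ Ω) :
    ∀ᶠ t in 𝓝[>] (0 : ℝ), t • π + (1 - t) • ρ ∈ strictBRinv v a :=
  (eventually_mix_mem_stdSimplex hπ hρ.1).and
    (nhdsWithin_le_nhds (eventually_forall_payP_mix_lt hρ.2 π))

theorem ubar_le_payP_of_mem_Ahat (hnrDM : NoRedundantDM v) (hconc : UbarConcave u v)
    (hπ : π ∈ stdSimplex ℝ Ω) (ha : a ∈ Ahat v) : ubar u v π ≤ payP u a π := by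
  obtain ⟨ρ, hρ⟩ := strictBRinv_nonempty hnrDM ha hπ
  obtain ⟨t, ⟨ht0, ht1⟩, hσ⟩ :=
    (Eventually.and (Ioo_mem_nhdsGT one_pos) (eventually_mix_mem_strictBRinv hρ hπ)).exists
  have hconcave : t * ubar u v π + (1 - t) * ubar u v ρ ≤ ubar u v (t • π + (1 - t) • ρ) :=
    hconc π hπ ρ hρ.1 t ⟨ht0.le, ht1.le⟩
  rw [ubar_eq_payP_of_mem_strictBRinv u hσ, ubar_eq_payP_of_mem_strictBRinv u hρ,
    payP_mix] at hconcave
  exact le_of_mul_le_mul_left (by linarith) ht0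

end StrictBestReplies

section Genericity

variable [Fintype Ω] [Fintype A] {u v : A → Ω → ℝ} {ρ : Ω → ℝ} {a : A}

theorem exists_mem_strictBRinv_forall_payP_ne (hnrE : NoRedundantExperts u)
    (hρ : ρ ∈ strictBRinv v a) :
    ∃ π' ∈ strictBRinv v a, ∀ b ≠ a, payP u b π' ≠ payP u a π' := by
  classical
  have hcont (b : A) : Continuous (payP v b) := by unfold payP; fun_prop
  -- Rescaled to total mass one, a point of `V` lies in `strictBRinv`, with the same expert ties.
  set V : Set (Ω → ℝ) := {x | (∀ ω, 0 < x ω) ∧ ∀ b ∈ Ahat v \ {a}, payP v b x < payP v a x}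
  have hVopen : IsOpen V := by
    simp only [V, Set.ofPred_and, Set.ofPred_forall]
    exact (isOpen_iInter_of_finite fun ω => isOpen_lt continuous_const (continuous_apply ω)).inter
      (isOpen_iInter_of_finite fun b => isOpen_iInter_of_finite fun _ =>
        isOpen_lt (hcont b) (hcont a))
  have hVne : V.Nonempty := by
    obtain ⟨t, ⟨ht0, ht1⟩, ht⟩ := (Eventually.and (Ioo_mem_nhdsGT one_pos)
      (nhdsWithin_le_nhds (eventually_forall_payP_mix_lt hρ.2 1))).exists
    refine ⟨t • 1 + (1 - t) • ρ, fun ω => ?_, ht⟩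
    simpa using add_pos_of_pos_of_nonneg ht0 (mul_nonneg (sub_nonneg.2 ht1.le) (hρ.1.1 ω))
  have hw (b : {b // b ≠ a}) : u b - u a ≠ 0 := fun h => by
    obtain ⟨ω, hω⟩ := hnrE b a b.2
    exact hω (sub_eq_zero.1 (congrFun h ω))
  obtain ⟨x, ⟨hxpos, hxv⟩, hx⟩ := hVopen.exists_forall_dotProduct_ne_zero hVne hw
  have hΩ : (univ : Finset Ω).Nonempty := univ.nonempty_of_sum_ne_zero (hρ.1.2 ▸ one_ne_zero)
  have hs : 0 < (∑ ω, x ω)⁻¹ := inv_pos.2 (sum_pos (fun ω _ => hxpos ω) hΩ)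
  refine ⟨(∑ ω, x ω)⁻¹ • x, ⟨⟨fun ω => (mul_pos hs (hxpos ω)).le, ?_⟩, fun b hb => ?_⟩, ?_⟩
  · simp [← mul_sum, inv_mul_cancel₀ (inv_pos.1 hs).ne']
  · rw [payP_smul, payP_smul]
    exact mul_lt_mul_of_pos_left (hxv b hb) hs
  · intro b hb
    rw [payP_smul, payP_smul, Ne, mul_right_inj' hs.ne', ← sub_eq_zero]
    simpa [payP_eq_dotProduct, dotProduct_comm, dotProduct_sub] using hx ⟨b, hb⟩

end Genericity

section Conflict

variable [Fintype Ω] [Fintype A] [Nonempty A] {u v : A → Ω → ℝ} {π : Ω → ℝ} {a : A}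

theorem mem_br_of_payP_eq_ubar (hnrDM : NoRedundantDM v) (hnrE : NoRedundantExperts u)
    (hconc : UbarConcave u v) (hπ : π ∈ stdSimplex ℝ Ω) (ha : a ∈ Ahat v)
    (hu : payP u a π = ubar u v π) : a ∈ br v π := by
  obtain ⟨ρ, hρ⟩ := strictBRinv_nonempty hnrDM ha hπ
  obtain ⟨π', hπ', hne⟩ := exists_mem_strictBRinv_forall_payP_ne hnrE hρ
  have hnotie : ∀ᶠ t in 𝓝[>] (0 : ℝ), ∀ b ≠ a,
      payP u b (t • π' + (1 - t) • π) ≠ payP u a (t • π' + (1 - t) • π) :=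
    eventually_all.2 fun (b : A) => eventually_imp_distrib_left.2 fun hb =>
      (eventually_mix_ne_zero (q := payP u b π - payP u a π) (sub_ne_zero.2 (hne b hb))).mono
        fun t ht h => ht (by rw [payP_mix, payP_mix] at h; linear_combination h)
  obtain ⟨t, ⟨⟨ht0, ht1⟩, hσ, hbr⟩, htie⟩ := ((Eventually.and (Ioo_mem_nhdsGT one_pos)
    ((eventually_mix_mem_stdSimplex hπ'.1 hπ).and
      (nhdsWithin_le_nhds (eventually_br_mix_subset (v := v) π' π)))).and hnotie).exists
  have hubar : ubar u v (t • π' + (1 - t) • π) = payP u a (t • π' + (1 - t) • π) := by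
    refine le_antisymm (ubar_le_payP_of_mem_Ahat hnrDM hconc hσ ha) ?_
    have hconcave := hconc π' hπ'.1 π hπ t ⟨ht0.le, ht1.le⟩
    rwa [ubar_eq_payP_of_mem_strictBRinv u hπ', ← hu, ← payP_mix] at hconcave
  obtain ⟨b, hb, hbu⟩ := (isGreatest_ubar u v _).1
  obtain rfl : b = a := by_contra fun h => htie b h (hbu.trans hubar)
  exact hbr hb

theorem mem_br_iff_mem_Ahat_and_payP_eq_ubar (hnrDM : NoRedundantDM v)
    (hnrE : NoRedundantExperts u) (hconc : UbarConcave u v) (hπ : π ∈ stdSimplex ℝ Ω) :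
    a ∈ br v π ↔ a ∈ Ahat v ∧ payP u a π = ubar u v π := by
  refine ⟨fun ha => ⟨br_subset_Ahat hπ ha, ?_⟩, fun ⟨ha, hu⟩ =>
    mem_br_of_payP_eq_ubar hnrDM hnrE hconc hπ ha hu⟩
  exact le_antisymm ((isGreatest_ubar u v π).2 ⟨a, ha, rfl⟩)
    (ubar_le_payP_of_mem_Ahat hnrDM hconc hπ (br_subset_Ahat hπ ha))

end Conflict

theorem BR_eq_argmin_expert_payoff_general {Ω A : Type*} [Fintype Ω] [Fintype A] [Nonempty A]
    (u v : A → Ω → ℝ)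
    (hnrDM : NoRedundantDM v) (hnrE : NoRedundantExperts u) (hconc : UbarConcave u v) :
    ∀ π ∈ stdSimplex ℝ Ω,
      BR v π = {α | α ∈ simplexOn (Ahat v) ∧ ∀ α' ∈ simplexOn (Ahat v), pay u α π ≤ pay u α' π} := by
  intro π hπ
  have hbr (a : A) := mem_br_iff_mem_Ahat_and_payP_eq_ubar (a := a) hnrDM hnrE hconc hπ
  obtain ⟨b, hb⟩ := br_nonempty v π
  ext α
  simp only [Set.mem_ofPred_eq, pay_eq_sum_payP, mem_BR_iff, hbr]
  exact (mem_argmin_simplexOn_iff (fun a ha => ubar_le_payP_of_mem_Ahat hnrDM hconc hπ ha)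
    ⟨b, (hbr b).1 hb⟩).symm

/-- Lemma 2: maximal conflict of interest everywhere. `BR(π)` is exactly the set of
minimizers of the experts' payoff over the mixed actions supported on `Â`. -/
theorem BR_eq_argmin_expert_payoff {Ω A : Type*} [Fintype Ω] [Nonempty Ω] [Fintype A] [Nonempty A]
    (u v : A → Ω → ℝ)
    (hnrDM : NoRedundantDM v) (hnrE : NoRedundantExperts u) (hconc : UbarConcave u v) :
    ∀ π ∈ stdSimplex ℝ Ω,
      BR v π = {α | α ∈ simplexOn (Ahat v) ∧ ∀ α' ∈ simplexOn (Ahat v), pay u α π ≤ pay u α' π} :=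
  BR_eq_argmin_expert_payoff_general u v hnrDM hnrE hconc
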